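/- arXiv:1610.02439 — 10 statements merged into one kernel-verified Lean document; each statement's English description precedes it below -/
import Mathlib

section
/- For every integer n ≥ 2, all but finitely many positive integers can be written as a sum of distinct n-th powers of positive integers; that is, the set of positive integers m for which there is no finite set F of positive integers with ∑_{k∈F} k^n = m is finite. -/
/-!
The `n`-th finite difference of `x ↦ x ^ n` with steps `1, 2, …, 2 ^ (n - 1)` is the constant
`D = n! · ∏ 2 ^ i`, and its `2 ^ n` sample points `x + ∑_{i ∈ S} 2 ^ i` are distinct; sorting them
by sign gives, in every window `[x, x + 2 ^ n)`, sets `P`, `Q` with `∑_P k ^ n = ∑_Q k ^ n + D`.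
Stacking `T` such windows realises `c + t D` for all `t ≤ T`, and `D` numbers `≡ 1 (mod D)` supply
every residue, so a long interval `[A, A + L]` consists of sums of distinct `n`-th powers from a
finite set `I`. Adding the remaining positive integers in increasing order keeps the representable
numbers an interval as long as each new `k ^ n` is at most `L + 1` plus the `n`-th powers already
added. For large `k` this holds because `I` is sparse: `[k / 2, k)` contains `2 ^ n` integers
outside `I`, whose `n`-th powers already add up to at least `k ^ n`.
-/

open Finset Polynomial
open scoped Nat

namespace Polynomial

variable {R : Type*} [CommRing R]

theorem coeff_taylor_eq_sum_range {p : R[X]} {k d : ℕ} (hp : p.natDegree ≤ k + d) (r : R) :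
    (taylor r p).coeff k = ∑ i ∈ range (d + 1), (i + k).choose k * p.coeff (i + k) * r ^ i := by
  have hdeg : (hasseDeriv k p).natDegree < d + 1 := by
    have := natDegree_hasseDeriv_le p k
    omega
  rw [taylor_coeff, eval_eq_sum_range' hdeg]
  simp only [hasseDeriv_coeff]

theorem natDegree_taylor_sub_le {p : R[X]} {m : ℕ} (hp : p.natDegree ≤ m + 1) (r : R) :
    (taylor r p - p).natDegree ≤ m := by
  refine natDegree_le_iff_coeff_eq_zero.2 fun j hj => ?_
  rw [coeff_sub, coeff_taylor_eq_sum_range (d := 0) (by omega)]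
  simp

theorem coeff_taylor_sub {p : R[X]} {m : ℕ} (hp : p.natDegree ≤ m + 1) (r : R) :
    (taylor r p - p).coeff m = (m + 1) * r * p.coeff (m + 1) := by
  rw [coeff_sub, coeff_taylor_eq_sum_range hp, sum_range_succ, sum_range_one]
  simp only [zero_add, Nat.choose_self, add_comm 1 m, Nat.choose_succ_self_right]
  push_cast
  ring

theorem sum_powerset_neg_one_pow_mul_eval (h : ℕ → R) {m : ℕ} {p : R[X]}
    (hp : p.natDegree ≤ m) (x : R) :
    ∑ S ∈ (range m).powerset, (-1) ^ (m - #S) * p.eval (x + ∑ i ∈ S, h i) =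
      m ! * (∏ i ∈ range m, h i) * p.coeff m := by
  induction m generalizing p with
  | zero => rw [eq_C_of_natDegree_le_zero hp]; simp
  | succ m ih =>
    have hdiff :
        ∑ S ∈ (range (m + 1)).powerset, (-1) ^ (m + 1 - #S) * p.eval (x + ∑ i ∈ S, h i) =
          ∑ S ∈ (range m).powerset,
            (-1) ^ (m - #S) * (taylor (h m) p - p).eval (x + ∑ i ∈ S, h i) := by
      rw [range_add_one, sum_powerset_insert notMem_range_self, ← sum_add_distrib]
      refine sum_congr rfl fun S hS => ?_
      have hmS : m ∉ S := fun hm => notMem_range_self (mem_powerset.1 hS hm)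
      have hcard : #S ≤ m := by simpa using card_le_card (mem_powerset.1 hS)
      rw [sum_insert hmS, card_insert_of_notMem hmS, eval_sub, taylor_eval, add_left_comm x,
        add_comm (h m), show m + 1 - #S = m - #S + 1 by omega,
        show m + 1 - (#S + 1) = m - #S by omega]
      ring
    rw [hdiff, ih (natDegree_taylor_sub_le hp _), coeff_taylor_sub hp, prod_range_succ,
      Nat.factorial_succ]
    push_cast
    ring

end Polynomial

theorem exists_sum_pow_eq_sum_pow_add (n x : ℕ) :
    ∃ P ⊆ Ico x (x + 2 ^ n), ∃ Q ⊆ Ico x (x + 2 ^ n),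
      ∑ k ∈ P, k ^ n = ∑ k ∈ Q, k ^ n + n ! * ∏ i ∈ range n, 2 ^ i := by
  set σ : Finset ℕ → ℕ := fun S => x + ∑ i ∈ S, 2 ^ i
  have hσ : Function.Injective σ := fun S T hST =>
    geomSum_injective le_rfl (by simpa [σ] using hST)
  have hσ_mem : ∀ S ∈ (range n).powerset, σ S ∈ Ico x (x + 2 ^ n) := fun S hS =>
    mem_Ico.2 ⟨by simp [σ], by
      simpa [σ] using Nat.geomSum_lt le_rfl fun k hk => mem_range.1 (mem_powerset.1 hS hk)⟩
  set evens := {S ∈ (range n).powerset | Even (n - #S)}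
  set odds := {S ∈ (range n).powerset | ¬Even (n - #S)}
  refine ⟨evens.image σ, image_subset_iff.2 fun S hS => hσ_mem S (mem_filter.1 hS).1,
    odds.image σ, image_subset_iff.2 fun S hS => hσ_mem S (mem_filter.1 hS).1, ?_⟩
  have key := sum_powerset_neg_one_pow_mul_eval (fun i => (2 : ℤ) ^ i) (natDegree_X_pow_le n) x
  simp only [eval_pow, eval_X, coeff_X_pow_self, mul_one, neg_one_pow_eq_ite, ite_mul, one_mul,
    neg_one_mul, sum_ite, sum_neg_distrib] at key
  rw [sum_image hσ.injOn, sum_image hσ.injOn]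
  zify
  push_cast [σ]
  linarith

def subsetSums (f : ℕ → ℕ) (S : Finset ℕ) : Set ℕ :=
  {m | ∃ F ⊆ S, ∑ k ∈ F, f k = m}

section SubsetSums

variable {f : ℕ → ℕ}

theorem subsetSums_mono {S S' : Finset ℕ} (h : S ⊆ S') : subsetSums f S ⊆ subsetSums f S' :=
  fun _ ⟨F, hF, hsum⟩ => ⟨F, hF.trans h, hsum⟩

theorem add_mem_subsetSums_union {S S' : Finset ℕ} {a b : ℕ} (hS : Disjoint S S')
    (ha : a ∈ subsetSums f S) (hb : b ∈ subsetSums f S') :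
    a + b ∈ subsetSums f (S ∪ S') := by
  obtain ⟨F, hF, rfl⟩ := ha
  obtain ⟨G, hG, rfl⟩ := hb
  exact ⟨F ∪ G, union_subset_union hF hG, sum_union (hS.mono hF hG)⟩

theorem exists_add_mul_mem_subsetSums {w D : ℕ}
    (hgadget : ∀ x, ∃ P ⊆ Ico x (x + w), ∃ Q ⊆ Ico x (x + w),
      ∑ k ∈ P, f k = ∑ k ∈ Q, f k + D)
    (x₀ T : ℕ) : ∃ c, ∀ t ≤ T, c + t * D ∈ subsetSums f (Ico x₀ (x₀ + T * w)) := by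
  induction T with
  | zero => exact ⟨0, fun t ht => ⟨∅, empty_subset _, by simp [Nat.le_zero.1 ht]⟩⟩
  | succ T ih =>
    obtain ⟨c, hc⟩ := ih
    obtain ⟨P, hP, Q, hQ, hPQ⟩ := hgadget (x₀ + T * w)
    have hsplit : Ico x₀ (x₀ + (T + 1) * w) =
        Ico x₀ (x₀ + T * w) ∪ Ico (x₀ + T * w) (x₀ + T * w + w) := by
      rw [Ico_union_Ico_eq_Ico (by omega) (by omega), add_mul, one_mul, add_assoc]
    have hdisj := Ico_disjoint_Ico_consecutive x₀ (x₀ + T * w) (x₀ + T * w + w)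
    refine ⟨c + ∑ k ∈ Q, f k, fun t ht => ?_⟩
    rw [hsplit]
    rcases Nat.lt_or_eq_of_le ht with ht | rfl
    · convert add_mem_subsetSums_union hdisj (hc t (by omega)) ⟨Q, hQ, rfl⟩ using 1
      ring
    · convert add_mem_subsetSums_union hdisj (hc T le_rfl) ⟨P, hP, rfl⟩ using 1
      rw [hPQ]
      ring

theorem Icc_subset_subsetSums_union_of_modEq {R B : Finset ℕ} {D E c T : ℕ} (hD : 0 < D)
    (hRB : Disjoint R B) (hR : ∀ r < D, ∃ e ∈ subsetSums f R, e ≡ r [MOD D] ∧ e ≤ E)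
    (hB : ∀ t ≤ T, c + t * D ∈ subsetSums f B) :
    Set.Icc (c + E) (c + T * D) ⊆ subsetSums f (R ∪ B) := by
  rintro m ⟨hEm, hmT⟩
  obtain ⟨e, he, hem, heE⟩ := hR ((m - c) % D) (Nat.mod_lt _ hD)
  obtain ⟨t, ht⟩ : D ∣ m - c - e :=
    (Nat.modEq_iff_dvd' (by omega)).1 (hem.trans (Nat.mod_modEq _ _))
  have htT : t ≤ T := by
    refine Nat.le_of_mul_le_mul_left ?_ hD
    rw [← ht, mul_comm]
    omega
  convert add_mem_subsetSums_union hRB he (hB t htT) using 1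
  rw [mul_comm t]
  omega

theorem Icc_add_subset_subsetSums_insert {S : Finset ℕ} {A L c : ℕ}
    (hS : Set.Icc A (A + L) ⊆ subsetSums f S) (hc : c ∉ S) (hfc : f c ≤ L + 1) :
    Set.Icc A (A + L + f c) ⊆ subsetSums f (insert c S) := by
  rintro m ⟨hAm, hmL⟩
  by_cases hm : m ≤ A + L
  · exact subsetSums_mono (subset_insert c S) (hS ⟨hAm, hm⟩)
  · obtain ⟨F, hFS, hF⟩ : m - f c ∈ subsetSums f S := hS ⟨by omega, by omega⟩
    refine ⟨insert c F, insert_subset_insert c hFS, ?_⟩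
    rw [sum_insert fun h => hc (hFS h), hF]
    omega

theorem Icc_subset_subsetSums_union_Icc {I : Finset ℕ} {A L : ℕ}
    (hI : Set.Icc A (A + L) ⊆ subsetSums f I)
    (hf : ∀ k, 0 < k → k ∉ I → f k ≤ L + 1 + ∑ j ∈ Ico 1 k \ I, f j) (N : ℕ) :
    Set.Icc A (A + L + ∑ j ∈ Icc 1 N \ I, f j) ⊆ subsetSums f (I ∪ Icc 1 N) := by
  induction N with
  | zero => simpa using hI
  | succ N ih =>
    rw [← insert_Icc_right_eq_Icc_add_one (by omega), union_insert]
    by_cases hNI : N + 1 ∈ I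
    · rwa [insert_sdiff_of_mem _ hNI, insert_eq_of_mem (mem_union_left _ hNI)]
    · rw [insert_sdiff_of_notMem _ hNI, sum_insert (by simp)]
      have hfN := hf (N + 1) N.succ_pos hNI
      rw [Ico_add_one_right_eq_Icc] at hfN
      have hN : N + 1 ∉ I ∪ Icc 1 N := by simp [hNI]
      rw [add_assoc] at ih
      convert Icc_add_subset_subsetSums_insert ih hN (by omega) using 2
      ring

theorem exists_mem_subsetSums_union_Icc {I : Finset ℕ} {A L : ℕ}
    (hpos : ∀ k, 0 < k → 0 < f k) (hI : Set.Icc A (A + L) ⊆ subsetSums f I)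
    (hf : ∀ k, 0 < k → k ∉ I → f k ≤ L + 1 + ∑ j ∈ Ico 1 k \ I, f j) {m : ℕ}
    (hm : A ≤ m) : ∃ N, m ∈ subsetSums f (I ∪ Icc 1 N) := by
  refine ⟨m + #I, Icc_subset_subsetSums_union_Icc hI hf _ ⟨hm, ?_⟩⟩
  have hcard : m ≤ #(Icc 1 (m + #I) \ I) := by
    have := le_card_sdiff I (Icc 1 (m + #I))
    simp only [Nat.card_Icc] at this
    omega
  have hsum : #(Icc 1 (m + #I) \ I) ≤ ∑ j ∈ Icc 1 (m + #I) \ I, f j := by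
    simpa using card_nsmul_le_sum _ f 1 fun j hj => hpos j (mem_Icc.1 (mem_sdiff.1 hj).1).1
  omega

end SubsetSums

theorem exists_mem_subsetSums_pow_modEq (n : ℕ) {D r : ℕ} (hD : 0 < D) (hr : r ≤ D) :
    ∃ e ∈ subsetSums (· ^ n) ((range D).image (· * D + 1)), e ≡ r [MOD D] ∧
      e ≤ ∑ k ∈ (range D).image (· * D + 1), k ^ n := by
  have hinj : Function.Injective (· * D + 1) := fun i j hij => by
    simpa [hD.ne'] using hij
  have hsub := image_subset_image (f := (· * D + 1)) (range_subset_range.2 hr)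
  refine ⟨_, ⟨(range r).image (· * D + 1), hsub, rfl⟩, ?_, sum_le_sum_of_subset hsub⟩
  calc ∑ k ∈ (range r).image (· * D + 1), k ^ n
      ≡ ∑ k ∈ (range r).image (· * D + 1), 1 [MOD D] := Nat.ModEq.sum fun k hk => by
        obtain ⟨i, -, rfl⟩ := mem_image.1 hk
        have : 1 ≡ i * D + 1 [MOD D] := (Nat.modEq_iff_dvd' (by omega)).2 (by simp)
        simpa using this.symm.pow n
    _ = r := by simp [card_image_of_injective _ hinj]

theorem pow_le_sum_pow_sdiff (n : ℕ) {I : Finset ℕ} {k : ℕ}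
    (hk : 2 ^ n + #{j ∈ I | j < k} ≤ k / 2) : k ^ n ≤ ∑ j ∈ Ico 1 k \ I, j ^ n := by
  have h2n : 0 < 2 ^ n := by positivity
  set U := Ico (k - k / 2) k \ I
  have hU : 2 ^ n ≤ #U := by
    have hIU : I ∩ Ico (k - k / 2) k ⊆ {j ∈ I | j < k} := fun j hj => by
      simp only [mem_inter, mem_Ico] at hj
      exact mem_filter.2 ⟨hj.1, hj.2.2⟩
    have := card_le_card hIU
    rw [card_sdiff, Nat.card_Ico]
    omega
  calc k ^ n ≤ (2 * (k - k / 2)) ^ n := Nat.pow_le_pow_left (by omega) n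
    _ = 2 ^ n * (k - k / 2) ^ n := mul_pow _ _ _
    _ ≤ #U * (k - k / 2) ^ n := Nat.mul_le_mul_right _ hU
    _ ≤ ∑ j ∈ U, j ^ n := by
      simpa using card_nsmul_le_sum U (· ^ n) _ fun j hj =>
        Nat.pow_le_pow_left (mem_Ico.1 (mem_sdiff.1 hj).1).1 n
    _ ≤ ∑ j ∈ Ico 1 k \ I, j ^ n :=
      sum_le_sum_of_subset (sdiff_subset_sdiff (Ico_subset_Ico_left (by omega)) le_rfl)

theorem exists_Icc_subset_subsetSums_pow (n : ℕ) {w D : ℕ} (hD : 0 < D)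
    (hgadget : ∀ x, ∃ P ⊆ Ico x (x + w), ∃ Q ⊆ Ico x (x + w),
      ∑ k ∈ P, k ^ n = ∑ k ∈ Q, k ^ n + D) :
    ∃ (A L : ℕ) (I : Finset ℕ), (∀ k ∈ I, 0 < k) ∧
      Set.Icc A (A + L) ⊆ subsetSums (· ^ n) I ∧
      ∀ k, 0 < k → k ^ n ≤ L + 1 + ∑ j ∈ Ico 1 k \ I, j ^ n := by
  have h2n : 0 < 2 ^ n := by positivity
  set R := (range D).image (· * D + 1)
  set E := ∑ k ∈ R, k ^ n
  set K := 2 ^ (n + 1) + 2 * D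
  set T := E + K ^ n + 1
  set W := T * w
  -- `T` makes `L = T * D - E ≥ K ^ n`, which settles every `k ≤ K`; below `x₀` the set `I` is
  -- just `R`, and beyond `x₀` we have `k / 2 ≥ 2 ^ n + #I`.
  set x₀ := D * D + 2 * (2 ^ n + D + W)
  obtain ⟨c, hc⟩ := exists_add_mul_mem_subsetSums hgadget x₀ T
  have hRx₀ : ∀ k ∈ R, 0 < k ∧ k < x₀ := fun k hk => by
    obtain ⟨i, hi, rfl⟩ := mem_image.1 hk
    have : i * D < D * D := Nat.mul_lt_mul_of_pos_right (mem_range.1 hi) hD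
    omega
  have hRcard : #R ≤ D := card_image_le.trans (card_range D).le
  have hTD : T ≤ T * D := Nat.le_mul_of_pos_right T hD
  refine ⟨c + E, T * D - E, R ∪ Ico x₀ (x₀ + W), fun k hk => ?_, ?_, fun k hk => ?_⟩
  · rcases mem_union.1 hk with hk | hk
    · exact (hRx₀ k hk).1
    · have := (mem_Ico.1 hk).1
      omega
  · rw [show c + E + (T * D - E) = c + T * D by omega]
    refine Icc_subset_subsetSums_union_of_modEq hD (disjoint_left.2 fun k hkR hkI => ?_)
      (fun r hr => exists_mem_subsetSums_pow_modEq n hD hr.le) hc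
    have := (hRx₀ k hkR).2
    have := (mem_Ico.1 hkI).1
    omega
  rcases le_or_gt k K with hkK | hkK
  · have : k ^ n ≤ K ^ n := Nat.pow_le_pow_left hkK n
    omega
  refine le_add_left (pow_le_sum_pow_sdiff n ?_)
  rcases lt_or_ge k x₀ with hkx₀ | hkx₀
  · have : #{j ∈ R ∪ Ico x₀ (x₀ + W) | j < k} ≤ #R := card_le_card fun j hj => by
      obtain ⟨hjR | hjW, hjk⟩ := (mem_filter.1 hj).imp_left mem_union.1
      · exact hjR
      · have := (mem_Ico.1 hjW).1
        omega
    omega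
  · have : #{j ∈ R ∪ Ico x₀ (x₀ + W) | j < k} ≤ D + W :=
      (card_filter_le _ _).trans ((card_union_le _ _).trans (by rw [Nat.card_Ico]; omega))
    omega

theorem completeness_of_nth_powers_general (n : ℕ) :
    {m : ℕ | 0 < m ∧
      ¬ ∃ F : Finset ℕ, (∀ k ∈ F, 0 < k) ∧ F.Nonempty ∧ ∑ k ∈ F, k ^ n = m}.Finite := by
  obtain ⟨A, L, I, hIpos, hI, hf⟩ :=
    exists_Icc_subset_subsetSums_pow n (by positivity) (exists_sum_pow_eq_sum_pow_add n)
  refine (Set.finite_Iio A).subset fun m ⟨hm0, hm⟩ =>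
    Set.mem_Iio.2 <| not_le.1 fun hAm => hm ?_
  obtain ⟨N, F, hF, rfl⟩ :=
    exists_mem_subsetSums_union_Icc (fun k hk => pow_pos hk n) hI (fun k hk _ => hf k hk) hAm
  refine ⟨F, fun k hk => ?_, nonempty_of_sum_ne_zero hm0.ne', rfl⟩
  rcases mem_union.1 (hF hk) with hk | hk
  · exact hIpos k hk
  · exact (mem_Icc.1 hk).1

/-- For every integer `n ≥ 2`, all but finitely many positive integers are sums of
distinct `n`-th powers of positive integers. -/
theorem completeness_of_nth_powers (n : ℕ) (hn : 2 ≤ n) :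
    {m : ℕ | 0 < m ∧
      ¬ ∃ F : Finset ℕ, (∀ k ∈ F, 0 < k) ∧ F.Nonempty ∧ ∑ k ∈ F, k ^ n = m}.Finite :=
  completeness_of_nth_powers_general n
end

section
/- Let k be a positive integer, let S = (s₁, s₂, …) be a strictly increasing sequence of positive integers satisfying s₁ ≤ k and s_m ≤ k + ∑_{j=1}^{m−1} s_j for all m ≥ 2, and let T = (t₁, t₂, …) be a sequence of positive integers such that for every integer t with 1 ≤ t ≤ k there is a finite nonempty set J of indices with c + t = ∑_{j∈J} t_j. Then for every integer m > c there exist a finite nonempty set J of indices of T and a finite (possibly empty) set I of indices of S such that m = ∑_{j∈J} t_j + ∑_{i∈I} s_i. In particular, every integer greater than c is a sum of distinct terms of the combined sequence (s₁, t₁, s₂, t₂, …). -/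
/-!
Greedy decomposition: the `Σ(k)` condition `s n ≤ k + ∑_{j<n} s j` says that subtracting `s n`
from any `x` beyond the range `k + ∑_{j<n} s j` lands back inside it. Hence every `x ≥ 1`
can be written as `r + ∑_{i∈I} s i` with `1 ≤ r ≤ k`, and `c + r` is a sum over a nonempty
set of terms of `t` by representability.
-/

open Finset

/-- With `0`-based indexing the condition `s₁ ≤ k` is the case `i = 0` of the recursive bound. -/
def IsSigmaSeq (k : ℕ) (s : ℕ → ℕ) : Prop :=
  ∀ i, s i ≤ k + ∑ j ∈ range i, s j

theorem IsSigmaSeq.of_le {k : ℕ} {s : ℕ → ℕ} (hs1 : s 0 ≤ k)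
    (hsig : ∀ i, 1 ≤ i → s i ≤ k + ∑ j ∈ range i, s j) : IsSigmaSeq k s := by
  intro i
  rcases Nat.eq_zero_or_pos i with rfl | hi
  · simpa using hs1
  · exact hsig i hi

theorem IsSigmaSeq.exists_eq_add_sum {k : ℕ} {s : ℕ → ℕ} (hsig : IsSigmaSeq k s) (n : ℕ) :
    ∀ x, 1 ≤ x → x ≤ k + ∑ j ∈ range n, s j →
      ∃ r I, 1 ≤ r ∧ r ≤ k ∧ I ⊆ range n ∧ x = r + ∑ i ∈ I, s i := by
  induction n with
  | zero => exact fun x hx1 hxk => ⟨x, ∅, hx1, by simpa using hxk, empty_subset _, by simp⟩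
  | succ n ih =>
    intro x hx1 hx
    by_cases hsmall : x ≤ k + ∑ j ∈ range n, s j
    · obtain ⟨r, I, hr1, hrk, hI, rfl⟩ := ih x hx1 hsmall
      exact ⟨r, I, hr1, hrk, hI.trans (range_subset_range.mpr n.le_succ), rfl⟩
    · have hsn := hsig n
      rw [sum_range_succ] at hx
      obtain ⟨r, I, hr1, hrk, hI, hrest⟩ := ih (x - s n) (by omega) (by omega)
      have hnI : n ∉ I := fun hn => by simpa using hI hn
      refine ⟨r, insert n I, hr1, hrk, ?_, ?_⟩
      · rw [range_add_one]
        exact insert_subset_insert n hI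
      · rw [sum_insert hnI]
        omega

theorem le_sum_range_of_pos {s : ℕ → ℕ} (hspos : ∀ i, 0 < s i) (n : ℕ) :
    n ≤ ∑ j ∈ range n, s j := by
  simpa using card_nsmul_le_sum (range n) s 1 fun i _ => hspos i

theorem complete_of_sigma_and_representable_general
    (k : ℕ) (c : ℕ)
    (s : ℕ → ℕ) (hspos : ∀ i, 0 < s i)
    (hs1 : s 0 ≤ k)
    (hsig : ∀ i, 1 ≤ i → s i ≤ k + ∑ j ∈ Finset.range i, s j)
    (t : ℕ → ℕ)
    (hrep : ∀ x, 1 ≤ x → x ≤ k →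
      ∃ J : Finset ℕ, J.Nonempty ∧ c + x = ∑ j ∈ J, t j) :
    ∀ m : ℕ, c < m →
      ∃ (J I : Finset ℕ), J.Nonempty ∧ m = ∑ j ∈ J, t j + ∑ i ∈ I, s i := by
  intro m hm
  have hbound := le_sum_range_of_pos hspos (m - c)
  obtain ⟨r, I, hr1, hrk, -, hdecomp⟩ :=
    (IsSigmaSeq.of_le hs1 hsig).exists_eq_add_sum (m - c) (m - c) (by omega) (by omega)
  obtain ⟨J, hJ, hcr⟩ := hrep r hr1 hrk
  exact ⟨J, I, hJ, by omega⟩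

/-- If `s` is a strictly increasing `Σ(k)`-sequence of positive integers and `t` is a
`(c,k)`-representable sequence of positive integers, then every integer greater than `c`
is a sum of distinct terms of the combined sequence. Sequences are indexed from `0`,
so `s 0` is the first term `s₁`. -/
theorem complete_of_sigma_and_representable
    (k : ℕ) (hk : 0 < k) (c : ℕ)
    (s : ℕ → ℕ) (hspos : ∀ i, 0 < s i) (hsmono : StrictMono s)
    (hs1 : s 0 ≤ k)
    (hsig : ∀ i, 1 ≤ i → s i ≤ k + ∑ j ∈ Finset.range i, s j)
    (t : ℕ → ℕ) (htpos : ∀ i, 0 < t i)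
    (hrep : ∀ x, 1 ≤ x → x ≤ k →
      ∃ J : Finset ℕ, J.Nonempty ∧ c + x = ∑ j ∈ J, t j) :
    ∀ m : ℕ, c < m →
      ∃ (J I : Finset ℕ), J.Nonempty ∧ m = ∑ j ∈ J, t j + ∑ i ∈ I, s i :=
  complete_of_sigma_and_representable_general k c s hspos hs1 hsig t hrep
end

section
/- Let n ≥ 2 be an integer, a = n!·2^(n²), and r = 2^(n²−n)·a. Then the following chain of inequalities holds (as real numbers): (r+1)^n / (r−1)^n < (a+2^n+1)^n / a^n < (2^n+2)^n / (2^n+1)^n ≤ 2. -/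
/-!
Each side is the `n`-th power of a ratio, so it suffices to compare the ratios. Writing
`b = 2^n + 1`, clearing denominators turns the first two comparisons into `2a < b(r - 1)` and
`b² < a`, both immediate from the sizes of `a` and `r`. The last one is
`(1 + 1/b)^n ≤ exp (n/b) ≤ exp (1/2) ≤ 2`, since `2n ≤ 2^n`.
-/

open Real

lemma add_one_div_sub_one_lt_add_div {a b r : ℝ} (ha : 0 < a) (hb : 1 ≤ b)
    (hr : 2 * a + 1 < r) :
    (r + 1) / (r - 1) < (a + b) / a := by
  rw [div_lt_div_iff₀ (by linarith) ha]
  nlinarith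

lemma add_div_self_lt_add_one_div {a b : ℝ} (hb : 0 < b) (hab : b ^ 2 < a) :
    (a + b) / a < (b + 1) / b := by
  rw [div_lt_div_iff₀ ((sq_nonneg b).trans_lt hab) hb]
  nlinarith

lemma one_add_pow_le_two {x : ℝ} {n : ℕ} (hx : -1 ≤ x) (hnx : n * x ≤ 1 / 2) :
    (1 + x) ^ n ≤ 2 :=
  calc (1 + x) ^ n ≤ exp x ^ n := by
        gcongr
        · linarith
        · linarith [add_one_le_exp x]
    _ = exp (n * x) := (exp_nat_mul x n).symm
    _ ≤ exp (1 / 2) := exp_le_exp.mpr hnx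
    _ ≤ 1 / (1 - 1 / 2) := exp_bound_div_one_sub_of_interval (by norm_num) (by norm_num)
    _ = 2 := by norm_num

lemma Nat.two_mul_le_two_pow {n : ℕ} (hn : 1 ≤ n) : 2 * n ≤ 2 ^ n := by
  obtain ⟨m, rfl⟩ := Nat.exists_eq_add_of_le' hn
  rw [pow_succ]
  linarith [m.lt_two_pow_self]

lemma Nat.sq_two_pow_add_one_lt_factorial_mul {n : ℕ} (hn : 2 ≤ n) :
    (2 ^ n + 1) ^ 2 < n.factorial * 2 ^ (n ^ 2) := by
  have hX : 4 ≤ 2 ^ n := by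
    simpa using Nat.pow_le_pow_right (by norm_num : 0 < 2) hn
  calc (2 ^ n + 1) ^ 2 < 2 * 2 ^ (2 * n) := by rw [pow_mul']; nlinarith
    _ ≤ n.factorial * 2 ^ (n ^ 2) := by
        gcongr
        · exact Nat.factorial_le hn
        · norm_num
        · nlinarith

lemma Nat.two_mul_add_one_lt_two_pow_mul {a k : ℕ} (ha : 0 < a) (hk : 2 ≤ k) :
    2 * a + 1 < 2 ^ k * a := by
  have : 4 ≤ 2 ^ k := by simpa using Nat.pow_le_pow_right (by norm_num : 0 < 2) hk
  nlinarith

/-- For `n ≥ 2`, `a = n!·2^(n²)`, `r = 2^(n²-n)·a`, the chain of inequalities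
`(r+1)^n/(r-1)^n < (a+2^n+1)^n/a^n < (2^n+2)^n/(2^n+1)^n ≤ 2` holds over the reals. -/
theorem ratio_chain_of_inequalities
    (n : ℕ) (hn : 2 ≤ n) (a r : ℕ)
    (ha : a = n.factorial * 2 ^ (n ^ 2))
    (hr : r = 2 ^ (n ^ 2 - n) * a) :
    ((r : ℝ) + 1) ^ n / ((r : ℝ) - 1) ^ n < ((a : ℝ) + 2 ^ n + 1) ^ n / (a : ℝ) ^ n ∧
    ((a : ℝ) + 2 ^ n + 1) ^ n / (a : ℝ) ^ n < ((2 : ℝ) ^ n + 2) ^ n / ((2 : ℝ) ^ n + 1) ^ n ∧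
    ((2 : ℝ) ^ n + 2) ^ n / ((2 : ℝ) ^ n + 1) ^ n ≤ 2 := by
  have ha_pos : 0 < a := ha ▸ by positivity
  have hb_pos : (0 : ℝ) < 2 ^ n + 1 := by positivity
  have hb_sq : ((2 : ℝ) ^ n + 1) ^ 2 < a := by
    rw [ha]; exact_mod_cast Nat.sq_two_pow_add_one_lt_factorial_mul hn
  have hr_gt : 2 * (a : ℝ) + 1 < r := by
    rw [hr]; exact_mod_cast Nat.two_mul_add_one_lt_two_pow_mul ha_pos
      (Nat.le_sub_of_add_le (by nlinarith))
  have h2n : 2 * (n : ℝ) ≤ 2 ^ n := by exact_mod_cast Nat.two_mul_le_two_pow (by omega)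
  rw [← div_pow, ← div_pow, ← div_pow, add_assoc,
    show (2 : ℝ) ^ n + 2 = 2 ^ n + 1 + 1 by ring]
  refine ⟨pow_lt_pow_left₀ ?_ (div_nonneg (by positivity) (by linarith)) (by omega),
    pow_lt_pow_left₀ ?_ (by positivity) (by omega), ?_⟩
  · exact add_one_div_sub_one_lt_add_div (by positivity) (by simp) hr_gt
  · exact add_div_self_lt_add_one_div hb_pos hb_sq
  · rw [add_div, div_self hb_pos.ne']
    refine one_add_pow_le_two (by linarith [one_div_pos.2 hb_pos]) ?_
    rw [mul_one_div, div_le_div_iff₀ hb_pos two_pos]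
    linarith
end

section
/- Let n ≥ 2 be an integer and a = n!·2^(n²), and let B₁ = {α·a + β : α, β integers, 0 ≤ α ≤ 2^(n²−n)−1, 1 ≤ β ≤ 2^n}. Then the sums of n-th powers over nonempty subsets of B₁ contain a complete residue system modulo a: for every integer t there exists a finite nonempty set F ⊆ B₁ such that ∑_{m∈F} m^n ≡ t (mod a). -/
/-!
Since `(α·a + 2^j)^n ≡ 2^(jn) (mod a)`, the `d` elements `α·a + 2^j` with `α < d` contribute
`d·(2^n)^j` to the sum of `n`-th powers modulo `a`. Represent the residue by some `T ∈ [1, a]`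
(nonzero, so that the set is nonempty) and expand `T = ∑_{j ≤ n} d_j (2^n)^j` in base `2^n`,
letting the top coefficient `d_n = T / 2^(n²)` absorb everything above the `n` lower digits.
The lower digits are `< 2^n` and `d_n ≤ n!`, so all `d_j` are at most `2^(n²-n)`, the number of
available `α`; the residues `2^j < a` are distinct, so no element is used twice.
-/

open Finset Nat

theorem Nat.sum_div_pow_mod_mul_pow_add_div_pow_mul_pow (m b k : ℕ) :
    ∑ j ∈ range k, m / b ^ j % b * b ^ j + m / b ^ k * b ^ k = m := by
  induction k with
  | zero => simp
  | succ k ih =>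
    have hdigit := Nat.mod_add_div (m / b ^ k) b
    rw [Nat.div_div_eq_div_mul, ← pow_succ] at hdigit
    conv_rhs => rw [← ih, ← hdigit]
    rw [sum_range_succ, pow_succ]
    ring

theorem Nat.exists_sum_range_succ_mul_pow_eq {b M : ℕ} (hb : 0 < b) (hbM : b ≤ M) (k : ℕ)
    {m : ℕ} (hm : m / b ^ k ≤ M) :
    ∃ d : ℕ → ℕ, (∀ j, d j ≤ M) ∧ ∑ j ∈ range (k + 1), d j * b ^ j = m := by
  refine ⟨fun j => if j < k then m / b ^ j % b else m / b ^ k, fun j => ?_, ?_⟩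
  · dsimp only
    split_ifs
    · exact (Nat.mod_lt _ hb).le.trans hbM
    · exact hm
  · rw [sum_range_succ]
    dsimp only
    rw [if_neg k.lt_irrefl]
    conv_rhs => rw [← m.sum_div_pow_mod_mul_pow_add_div_pow_mul_pow b k]
    congr 1
    exact sum_congr rfl fun j hj => by rw [if_pos (mem_range.1 hj)]

theorem Int.exists_natCast_modEq_mem_Icc {a : ℕ} (ha : 0 < a) (t : ℤ) :
    ∃ T : ℕ, T ∈ Icc 1 a ∧ (T : ℤ) ≡ t [ZMOD a] := by
  have ha' : (0 : ℤ) < a := by exact_mod_cast ha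
  have h0 := Int.emod_nonneg (t - 1) ha'.ne'
  have hlt := Int.emod_lt_of_pos (t - 1) ha'
  refine ⟨((t - 1) % a + 1).toNat, mem_Icc.2 ⟨by omega, by omega⟩, ?_⟩
  rw [Int.toNat_of_nonneg (by omega)]
  simpa using (Int.mod_modEq (t - 1) a).add_right 1

theorem Nat.factorial_le_two_pow_sq_sub_self (n : ℕ) : n ! ≤ 2 ^ (n ^ 2 - n) :=
  calc n ! ≤ n ^ n := n.factorial_le_pow
    _ ≤ (2 ^ (n - 1)) ^ n := Nat.pow_le_pow_left (by have := (n - 1).lt_two_pow_self; omega) n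
    _ = 2 ^ (n ^ 2 - n) := by rw [← pow_mul, Nat.sub_one_mul, sq]

section ShiftedCopies

variable {ι : Type*} (a : ℕ) (x d : ι → ℕ) (s : Finset ι)

def shiftedCopies : Finset ℕ :=
  s.biUnion fun j => (range (d j)).image fun α => α * a + x j

variable {a x d s}

theorem mem_shiftedCopies {m : ℕ} :
    m ∈ shiftedCopies a x d s ↔ ∃ j ∈ s, ∃ α < d j, α * a + x j = m := by
  simp [shiftedCopies]

theorem shiftedCopies_nonempty {j : ι} (hj : j ∈ s) (hd : d j ≠ 0) :
    (shiftedCopies a x d s).Nonempty :=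
  ⟨0 * a + x j, mem_shiftedCopies.2 ⟨j, hj, 0, Nat.pos_of_ne_zero hd, rfl⟩⟩

theorem natCast_mul_add_modEq (α a y : ℕ) : ((α * a + y : ℕ) : ℤ) ≡ y [ZMOD a] := by
  simp [Int.ModEq]

theorem sum_pow_shiftedCopies_modEq (hx : ∀ j ∈ s, x j < a) (hinj : Set.InjOn x s) (n : ℕ) :
    ∑ m ∈ shiftedCopies a x d s, (m : ℤ) ^ n ≡ ∑ j ∈ s, (d j : ℤ) * (x j : ℤ) ^ n [ZMOD a] := by
  have hdisj : (s : Set ι).PairwiseDisjoint fun j => (range (d j)).image fun α => α * a + x j := by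
    intro i hi j hj hij
    simp only [Function.onFun, Finset.disjoint_left, mem_image, mem_range]
    rintro _ ⟨α, -, rfl⟩ ⟨β, -, h⟩
    refine hij (hinj hi hj ?_)
    simpa [Nat.mod_eq_of_lt (hx i hi), Nat.mod_eq_of_lt (hx j hj)] using (congrArg (· % a) h).symm
  rw [shiftedCopies, sum_biUnion hdisj]
  refine Int.ModEq.sum fun j hj => ?_
  have ha : 0 < a := (Nat.zero_le _).trans_lt (hx j hj)
  rw [sum_image fun α _ β _ h => Nat.eq_of_mul_eq_mul_right ha (Nat.add_right_cancel h)]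
  calc _ ≡ ∑ α ∈ range (d j), (x j : ℤ) ^ n [ZMOD a] :=
        Int.ModEq.sum fun α _ => (natCast_mul_add_modEq α a (x j)).pow n
    _ = _ := by simp

end ShiftedCopies

/-- With `a = n!·2^(n²)` and `B₁ = {α·a + β : 0 ≤ α ≤ 2^(n²-n)-1, 1 ≤ β ≤ 2^n}`, the sums
of `n`-th powers over nonempty subsets of `B₁` contain a complete residue system mod `a`. -/
theorem powers_of_B1_complete_residue_system
    (n : ℕ) (hn : 2 ≤ n) (a : ℕ)
    (ha : a = n.factorial * 2 ^ (n ^ 2))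
    (B1 : Set ℕ)
    (hB1 : B1 = {m | ∃ α β : ℕ, α ≤ 2 ^ (n ^ 2 - n) - 1 ∧ 1 ≤ β ∧ β ≤ 2 ^ n ∧
      m = α * a + β}) :
    ∀ t : ℤ, ∃ F : Finset ℕ, (↑F : Set ℕ) ⊆ B1 ∧ F.Nonempty ∧
      (∑ m ∈ F, (m : ℤ) ^ n) ≡ t [ZMOD (a : ℤ)] := by
  intro t
  have hn_le : n ≤ n ^ 2 - n := by rw [sq]; have := Nat.mul_le_mul_left n hn; omega
  have hsq : (2 ^ n) ^ n = 2 ^ (n ^ 2) := by rw [← pow_mul, sq]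
  have hpow_lt : ∀ j ∈ range (n + 1), 2 ^ j < a := fun j hj => calc
    2 ^ j < 2 ^ (n ^ 2) := Nat.pow_lt_pow_right one_lt_two (by have := mem_range.1 hj; omega)
    _ ≤ a := ha ▸ Nat.le_mul_of_pos_left _ n.factorial_pos
  have ha_pos : 0 < a := ha ▸ by positivity
  obtain ⟨T, hT, hTt⟩ := Int.exists_natCast_modEq_mem_Icc ha_pos t
  obtain ⟨d, hdM, hdT⟩ := Nat.exists_sum_range_succ_mul_pow_eq (by positivity)
    (Nat.pow_le_pow_right two_pos hn_le) n (m := T) <| calc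
      T / (2 ^ n) ^ n ≤ a / 2 ^ (n ^ 2) := hsq ▸ Nat.div_le_div_right (mem_Icc.1 hT).2
      _ = n ! := by rw [ha, Nat.mul_div_cancel _ (by positivity)]
      _ ≤ 2 ^ (n ^ 2 - n) := n.factorial_le_two_pow_sq_sub_self
  refine ⟨shiftedCopies a (2 ^ ·) d (range (n + 1)), fun m hm => ?_, ?_, ?_⟩
  · obtain ⟨j, hj, α, hα, rfl⟩ := mem_shiftedCopies.1 hm
    have := hdM j
    exact hB1 ▸ ⟨α, 2 ^ j, by omega, Nat.one_le_two_pow,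
      Nat.pow_le_pow_right two_pos (by have := mem_range.1 hj; omega), rfl⟩
  · obtain ⟨j, hj, hdj⟩ := exists_ne_zero_of_sum_ne_zero 
      (hdT.trans_ne (Nat.one_le_iff_ne_zero.1 (mem_Icc.1 hT).1))
    exact shiftedCopies_nonempty hj (left_ne_zero_of_mul hdj)
  · have hsum : ∑ j ∈ range (n + 1), (d j : ℤ) * ((2 ^ j : ℕ) : ℤ) ^ n = T := by
      rw [← hdT]
      push_cast
      simp only [pow_right_comm]
    exact (sum_pow_shiftedCopies_modEq hpow_lt (Nat.pow_right_injective le_rfl).injOn n).trans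
      (hsum ▸ hTt)
end

section
/- Let n ≥ 2 be an integer. Then every integer m with 1 ≤ m ≤ 2^(n²−n)·(1^n + 2^n + 3^n + ⋯ + (2^n)^n) can be written as m = ∑_{j=1}^{2^n} c_j·j^n for some integers c_j with 0 ≤ c_j ≤ 2^(n²−n) for each j. -/
/-!
Greedy choice from the top: given `m ≤ B·(a₁ + ⋯ + a_{k+1})`, take `c_{k+1} = min(B, ⌊m / a_{k+1}⌋)`.
The remainder is at most `B·(a₁ + ⋯ + a_k)`, either because `c_{k+1} = B`, or because it is
less than `a_{k+1}`, and the gap condition `a_{k+1} ≤ B·(a₁ + ⋯ + a_k) + 1` closes that case.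
For `a_j = j^n` the gap condition holds with `B = 2^n ≤ 2^(n²-n)`, since `(k+1)^n ≤ (2k)^n`.
-/

open Finset

def Representable (B : ℕ) (a : ℕ → ℕ) (k m : ℕ) : Prop :=
  ∃ c : ℕ → ℕ, (∀ j, c j ≤ B) ∧ m = ∑ j ∈ Icc 1 k, c j * a j

namespace Representable

variable {B : ℕ} {a : ℕ → ℕ} {k m : ℕ}

theorem zero (B : ℕ) (a : ℕ → ℕ) (k : ℕ) : Representable B a k 0 :=
  ⟨fun _ => 0, fun _ => Nat.zero_le _, by simp⟩

theorem succ (h : Representable B a k m) {q : ℕ} (hq : q ≤ B) :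
    Representable B a (k + 1) (m + q * a (k + 1)) := by
  obtain ⟨c, hcB, rfl⟩ := h
  refine ⟨Function.update c (k + 1) q, fun j => ?_, ?_⟩
  · rcases eq_or_ne j (k + 1) with rfl | hj
    · simpa using hq
    · simpa [Function.update_of_ne hj] using hcB j
  · rw [sum_Icc_succ_top (by omega), Function.update_self]
    congr 1
    refine sum_congr rfl fun j hj => ?_
    rw [Function.update_of_ne (by simp at hj; omega)]

end Representable

theorem representable_of_le_mul_sum {B : ℕ} {a : ℕ → ℕ}
    (gap : ∀ k, a (k + 1) ≤ B * ∑ j ∈ Icc 1 k, a j + 1) (k : ℕ) {m : ℕ}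
    (hm : m ≤ B * ∑ j ∈ Icc 1 k, a j) : Representable B a k m := by
  induction k generalizing m with
  | zero =>
    obtain rfl : m = 0 := by simpa using hm
    exact Representable.zero B a 0
  | succ k ih =>
    rw [sum_Icc_succ_top (by omega), Nat.mul_add] at hm
    by_cases hBm : B * a (k + 1) ≤ m
    · have hrest := (ih (m := m - B * a (k + 1)) (by omega)).succ le_rfl
      rwa [Nat.sub_add_cancel hBm] at hrest
    · have ha : 0 < a (k + 1) := Nat.pos_of_ne_zero fun h => by simp [h] at hBm
      have hq : m / a (k + 1) ≤ B :=
        ((Nat.div_lt_iff_lt_mul ha).mpr (by omega)).le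
      have hr : m % a (k + 1) ≤ B * ∑ j ∈ Icc 1 k, a j := by
        have := Nat.mod_lt m ha
        have := gap k
        omega
      have hrest := (ih hr).succ hq
      rwa [Nat.mod_add_div'] at hrest

theorem succ_pow_le_two_pow_mul_sum_pow_add_one (n k : ℕ) :
    (k + 1) ^ n ≤ 2 ^ n * ∑ j ∈ Icc 1 k, j ^ n + 1 := by
  rcases Nat.eq_zero_or_pos k with rfl | hk
  · simp
  calc (k + 1) ^ n ≤ (2 * k) ^ n := Nat.pow_le_pow_left (by omega) n
    _ = 2 ^ n * k ^ n := mul_pow 2 k n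
    _ ≤ 2 ^ n * ∑ j ∈ Icc 1 k, j ^ n := by
      gcongr
      exact single_le_sum (f := fun j => j ^ n) (fun _ _ => Nat.zero_le _)
        (mem_Icc.mpr ⟨hk, le_rfl⟩)
    _ ≤ _ := Nat.le_succ _

theorem two_pow_le_two_pow_sq_sub {n : ℕ} (hn : 2 ≤ n) : 2 ^ n ≤ 2 ^ (n ^ 2 - n) := by
  apply Nat.pow_le_pow_right two_pos
  have : 2 * n ≤ n * n := Nat.mul_le_mul_right n hn
  rw [sq]
  omega

theorem representation_with_bounded_coefficients_general
    (n : ℕ) (hn : 2 ≤ n) (m : ℕ)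
    (hm2 : m ≤ 2 ^ (n ^ 2 - n) * ∑ j ∈ Finset.Icc 1 (2 ^ n), j ^ n) :
    ∃ c : ℕ → ℕ, (∀ j, c j ≤ 2 ^ (n ^ 2 - n)) ∧
      m = ∑ j ∈ Finset.Icc 1 (2 ^ n), c j * j ^ n := by
  have gap (k : ℕ) : (k + 1) ^ n ≤ 2 ^ (n ^ 2 - n) * ∑ j ∈ Icc 1 k, j ^ n + 1 :=
    (succ_pow_le_two_pow_mul_sum_pow_add_one n k).trans
      (by gcongr ?_ * _ + _; exact two_pow_le_two_pow_sq_sub hn)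
  exact representable_of_le_mul_sum (a := fun j => j ^ n) gap (2 ^ n) hm2

/-- For `n ≥ 2`, every integer `m` with `1 ≤ m ≤ 2^(n²-n)·(1^n + 2^n + ⋯ + (2^n)^n)` can be
written as `m = ∑_{j=1}^{2^n} c_j · j^n` with `0 ≤ c_j ≤ 2^(n²-n)` for each `j`. -/
theorem representation_with_bounded_coefficients
    (n : ℕ) (hn : 2 ≤ n) (m : ℕ)
    (hm1 : 1 ≤ m)
    (hm2 : m ≤ 2 ^ (n ^ 2 - n) * ∑ j ∈ Finset.Icc 1 (2 ^ n), j ^ n) :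
    ∃ c : ℕ → ℕ, (∀ j, c j ≤ 2 ^ (n ^ 2 - n)) ∧
      m = ∑ j ∈ Finset.Icc 1 (2 ^ n), c j * j ^ n :=
  representation_with_bounded_coefficients_general n hn m hm2
end

section
/- Define the operator Δ on functions g : ℤ → ℤ by (Δg)(x) = g(4x+2) − g(4x). Then for every integer n ≥ 1, the n-fold iterate Δⁿ applied to the function f(x) = x^n is the constant function with value n!·2^(n²); that is, (Δⁿ f)(x) = n!·2^(n²) for all integers x. -/
/-! On monomials the operator `g ↦ g (a x + b) - g (a x)` lowers the degree by one, sending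
`x ^ j` to `j a ^ (j - 1) b x ^ (j - 1)` plus lower-degree terms (binomial theorem). Being linear,
its `n`-th iterate kills `x ^ j` for `j < n` and sends `x ^ n` to the constant
`n! a ^ (n choose 2) b ^ n`; for `a = 4`, `b = 2` this is `n! 2 ^ (n ^ 2)`. -/

open Finset Nat

variable {R : Type*} [CommRing R]

def dilatedDiff (a b : R) : Module.End R (R → R) :=
  LinearMap.funLeft R R (fun x => a * x + b) - LinearMap.funLeft R R (fun x => a * x)

theorem dilatedDiff_apply (a b : R) (g : R → R) (x : R) :
    dilatedDiff a b g x = g (a * x + b) - g (a * x) :=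
  rfl

theorem dilatedDiff_pow_fun (a b : R) (j : ℕ) :
    dilatedDiff a b (· ^ j) =
      ∑ i ∈ range j, ((j.choose i : R) * a ^ i * b ^ (j - i)) • (· ^ i) := by
  funext x
  rw [dilatedDiff_apply, add_pow, sum_range_succ, Nat.sub_self, Nat.choose_self]
  simp only [pow_zero, mul_one, Nat.cast_one, add_sub_cancel_right, Finset.sum_apply,
    Pi.smul_apply, smul_eq_mul]
  refine sum_congr rfl fun i _ => ?_
  ring

theorem dilatedDiff_iterate_pow_fun (a b : R) {n j : ℕ} (hj : j ≤ n) :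
    (dilatedDiff a b ^ n) (· ^ j) =
      if j = n then fun _ => (n ! * a ^ n.choose 2 * b ^ n : R) else (0 : R → R) := by
  induction n generalizing j with
  | zero =>
    obtain rfl : j = 0 := Nat.le_zero.mp hj
    funext x
    simp
  | succ n ih =>
    have h_lower : ∀ i ∈ range j, (dilatedDiff a b ^ n) (· ^ i) =
        if i = n then fun _ => (n ! * a ^ n.choose 2 * b ^ n : R) else (0 : R → R) :=
      fun i hi => ih (by have := mem_range.mp hi; omega)
    rw [pow_succ, Module.End.mul_apply, dilatedDiff_pow_fun, map_sum]
    simp only [map_smul]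
    rw [sum_congr rfl fun i hi => by rw [h_lower i hi]]
    simp only [smul_ite, smul_zero, sum_ite_eq']
    by_cases hjn : j = n + 1
    · subst hjn
      funext x
      rw [if_pos (self_mem_range_succ n), if_pos rfl, Nat.choose_succ_self_right,
        Nat.add_sub_cancel_left, factorial_succ, Nat.choose_succ_succ', Nat.choose_one_right]
      simp only [Pi.smul_apply, smul_eq_mul]
      push_cast
      ring
    · rw [if_neg (by rw [mem_range]; omega), if_neg hjn]

theorem four_pow_choose_two_mul_two_pow (n : ℕ) : 4 ^ n.choose 2 * 2 ^ n = 2 ^ (n ^ 2) := by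
  induction n with
  | zero => rfl
  | succ n ih =>
    rw [Nat.choose_succ_succ', Nat.choose_one_right, pow_add,
      show (n + 1) ^ 2 = 2 * n + 1 + n ^ 2 by ring, pow_add 2 _ (n ^ 2), ← ih,
      show (4 : ℕ) ^ n = 2 ^ (2 * n) by rw [pow_mul]; rfl]
    ring

theorem delta_iterate_of_power_is_constant_general
    (Δ : (ℤ → ℤ) → (ℤ → ℤ))
    (hΔ : ∀ (g : ℤ → ℤ) (x : ℤ), Δ g x = g (4 * x + 2) - g (4 * x))
    (n : ℕ) :
    ∀ x : ℤ, (Δ^[n] (fun y : ℤ => y ^ n)) x = n.factorial * 2 ^ (n ^ 2) := by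
  intro x
  have hΔ_eq : Δ = dilatedDiff 4 2 := funext fun g => funext (hΔ g)
  rw [hΔ_eq, ← Module.End.coe_pow, dilatedDiff_iterate_pow_fun 4 2 le_rfl, if_pos rfl,
    mul_assoc]
  exact_mod_cast congrArg (n ! * ·) (four_pow_choose_two_mul_two_pow n)

/-- Let `Δ` be the operator on functions `g : ℤ → ℤ` defined by
`(Δ g) x = g (4x+2) - g (4x)`. Then for `n ≥ 1`, the `n`-fold iterate of `Δ` applied to
`x ↦ x^n` is the constant function with value `n!·2^(n²)`. -/
theorem delta_iterate_of_power_is_constant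
    (Δ : (ℤ → ℤ) → (ℤ → ℤ))
    (hΔ : ∀ (g : ℤ → ℤ) (x : ℤ), Δ g x = g (4 * x + 2) - g (4 * x))
    (n : ℕ) (hn : 1 ≤ n) :
    ∀ x : ℤ, (Δ^[n] (fun y : ℤ => y ^ n)) x = n.factorial * 2 ^ (n ^ 2) :=
  delta_iterate_of_power_is_constant_general Δ hΔ n
end

section
/- Let n ≥ 2 be an integer and define Δ on functions g : ℤ → ℤ by (Δg)(x) = g(4x+2) − g(4x). Then for every integer k with 1 ≤ k ≤ n there exist disjoint finite sets A and B of even nonnegative integers, each of cardinality 2^(k−1), with every element of A ∪ B at most (2/3)·(2^(2k)−1), such that for every integer x, (Δᵏ f)(x) = ∑_{α∈A} (2^(2k)·x + α)^n − ∑_{β∈B} (2^(2k)·x + β)^n, where f(x) = x^n. -/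
/-!
If `Δᵏ g x = ∑_{α ∈ A} g (4ᵏ x + α) - ∑_{β ∈ B} g (4ᵏ x + β)`, then substituting `4x + 2` and `4x`
shows that `Δᵏ⁺¹ g` has the same shape with `A ↦ (A + 2·4ᵏ) ∪ B` and `B ↦ (B + 2·4ᵏ) ∪ A`.
All nodes are below `2·4ᵏ`, so the shifted nodes never meet the unshifted ones: disjointness,
cardinalities and the bound `(2/3)(4ᵏ - 1)` propagate. The identity holds for every `g`, not only for `x ↦ xⁿ`.
-/

open Finset

def quarterDiff {G : Type*} [AddCommGroup G] (g : ℤ → G) (x : ℤ) : G :=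
  g (4 * x + 2) - g (4 * x)

/-- The base-4 numbers with `k` digits, all in `{0, 2}`, split according to whether the number
of zero digits is even (first component) or odd (second component). -/
def quarterDiffNodes : ℕ → Finset ℕ × Finset ℕ
  | 0 => ({0}, ∅)
  | k + 1 =>
    let A := (quarterDiffNodes k).1
    let B := (quarterDiffNodes k).2
    (A.map (addRightEmbedding (2 * 4 ^ k)) ∪ B, B.map (addRightEmbedding (2 * 4 ^ k)) ∪ A)

namespace quarterDiffNodes

theorem mem_union_succ {k α : ℕ} :
    α ∈ (quarterDiffNodes (k + 1)).1 ∪ (quarterDiffNodes (k + 1)).2 ↔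
      α ∈ (quarterDiffNodes k).1 ∪ (quarterDiffNodes k).2 ∨
        ∃ β ∈ (quarterDiffNodes k).1 ∪ (quarterDiffNodes k).2, β + 2 * 4 ^ k = α := by
  simp only [quarterDiffNodes, mem_union, mem_map, addRightEmbedding_apply]
  grind

theorem two_dvd_of_mem {k α : ℕ}
    (h : α ∈ (quarterDiffNodes k).1 ∪ (quarterDiffNodes k).2) : 2 ∣ α := by
  induction k generalizing α with
  | zero => simp_all [quarterDiffNodes]
  | succ k ih =>
    rcases mem_union_succ.mp h with h | ⟨β, hβ, rfl⟩
    · exact ih h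
    · exact dvd_add (ih hβ) (dvd_mul_right 2 _)

theorem three_mul_add_two_le_of_mem {k α : ℕ}
    (h : α ∈ (quarterDiffNodes k).1 ∪ (quarterDiffNodes k).2) : 3 * α + 2 ≤ 2 * 4 ^ k := by
  induction k generalizing α with
  | zero => simp_all [quarterDiffNodes]
  | succ k ih =>
    rcases mem_union_succ.mp h with h | ⟨β, hβ, rfl⟩
    · have := ih h; rw [pow_succ]; omega
    · have := ih hβ; rw [pow_succ]; omega

theorem disjoint_map_shift {k : ℕ} (S : Finset ℕ) {T : Finset ℕ}
    (hT : T ⊆ (quarterDiffNodes k).1 ∪ (quarterDiffNodes k).2) :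
    Disjoint (S.map (addRightEmbedding (2 * 4 ^ k))) T := by
  rw [disjoint_left]
  intro α hα hαT
  obtain ⟨β, -, rfl⟩ := mem_map.mp hα
  have := three_mul_add_two_le_of_mem (hT hαT)
  simp only [addRightEmbedding_apply] at this
  omega

theorem disjoint (k : ℕ) : Disjoint (quarterDiffNodes k).1 (quarterDiffNodes k).2 := by
  induction k with
  | zero => simp [quarterDiffNodes]
  | succ k ih =>
    simp only [quarterDiffNodes, disjoint_union_left, disjoint_union_right]
    exact ⟨⟨disjoint_map _ |>.mpr ih, (disjoint_map_shift _ subset_union_right).symm⟩,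
      disjoint_map_shift _ subset_union_left, ih.symm⟩

theorem card_add_card (k : ℕ) :
    #(quarterDiffNodes k).1 + #(quarterDiffNodes k).2 = 2 ^ k := by
  induction k with
  | zero => simp [quarterDiffNodes]
  | succ k ih =>
    simp only [quarterDiffNodes]
    rw [card_union_of_disjoint (disjoint_map_shift _ subset_union_right),
      card_union_of_disjoint (disjoint_map_shift _ subset_union_left), card_map, card_map]
    omega

theorem card_fst_succ (k : ℕ) : #(quarterDiffNodes (k + 1)).1 = 2 ^ k := by
  simp only [quarterDiffNodes]
  rw [card_union_of_disjoint (disjoint_map_shift _ subset_union_right), card_map, card_add_card]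

theorem card_snd_succ (k : ℕ) : #(quarterDiffNodes (k + 1)).2 = 2 ^ k := by
  simp only [quarterDiffNodes]
  rw [card_union_of_disjoint (disjoint_map_shift _ subset_union_left), card_map, add_comm,
    card_add_card]

end quarterDiffNodes

theorem iterate_quarterDiff_apply {G : Type*} [AddCommGroup G] (g : ℤ → G) (k : ℕ) (x : ℤ) :
    quarterDiff^[k] g x =
      ∑ α ∈ (quarterDiffNodes k).1, g (4 ^ k * x + α) -
        ∑ β ∈ (quarterDiffNodes k).2, g (4 ^ k * x + β) := by
  induction k generalizing x with
  | zero => simp [quarterDiffNodes]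
  | succ k ih =>
    have shift (S : Finset ℕ) (y : ℤ) :
        ∑ α ∈ S.map (addRightEmbedding (2 * 4 ^ k)), g (4 ^ (k + 1) * y + α) =
          ∑ α ∈ S, g (4 ^ k * (4 * y + 2) + α) := by
      refine sum_map _ _ _ |>.trans (sum_congr rfl fun α _ => congrArg g ?_)
      push_cast [addRightEmbedding_apply]
      ring
    have unshift (S : Finset ℕ) (y : ℤ) :
        ∑ α ∈ S, g (4 ^ (k + 1) * y + α) = ∑ α ∈ S, g (4 ^ k * (4 * y) + α) := by
      simp only [pow_succ, mul_assoc]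
    simp only [quarterDiffNodes]
    rw [Function.iterate_succ_apply', quarterDiff, ih, ih,
      sum_union (quarterDiffNodes.disjoint_map_shift _ subset_union_right),
      sum_union (quarterDiffNodes.disjoint_map_shift _ subset_union_left),
      shift, shift, unshift, unshift]
    abel

theorem delta_iterate_as_signed_power_sum_general
    (n : ℕ)
    (Δ : (ℤ → ℤ) → (ℤ → ℤ))
    (hΔ : ∀ (g : ℤ → ℤ) (x : ℤ), Δ g x = g (4 * x + 2) - g (4 * x))
    (k : ℕ) (hk1 : 1 ≤ k) :
    ∃ A B : Finset ℕ, Disjoint A B ∧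
      A.card = 2 ^ (k - 1) ∧ B.card = 2 ^ (k - 1) ∧
      (∀ α ∈ A ∪ B, 2 ∣ α ∧ α ≤ 2 * (2 ^ (2 * k) - 1) / 3) ∧
      ∀ x : ℤ, (Δ^[k] (fun y : ℤ => y ^ n)) x =
        ∑ α ∈ A, (2 ^ (2 * k) * x + (α : ℤ)) ^ n -
          ∑ β ∈ B, (2 ^ (2 * k) * x + (β : ℤ)) ^ n := by
  obtain ⟨j, rfl⟩ := Nat.exists_eq_add_of_le' hk1
  have hΔ : Δ = quarterDiff := funext fun g => funext (hΔ g)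
  refine ⟨_, _, quarterDiffNodes.disjoint (j + 1), quarterDiffNodes.card_fst_succ j,
    quarterDiffNodes.card_snd_succ j, fun α hα => ⟨quarterDiffNodes.two_dvd_of_mem hα, ?_⟩,
    fun x => ?_⟩
  · have := quarterDiffNodes.three_mul_add_two_le_of_mem hα
    rw [pow_mul, show (2 : ℕ) ^ 2 = 4 by norm_num]
    omega
  · rw [hΔ, iterate_quarterDiff_apply, pow_mul]
    norm_num

/-- Let `Δ` be the operator `(Δ g) x = g (4x+2) - g (4x)` on `g : ℤ → ℤ`, and `f x = x^n`
with `n ≥ 2`. For `1 ≤ k ≤ n` there are disjoint finite sets `A`, `B` of even nonnegative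
integers, each of size `2^(k-1)`, all elements at most `(2/3)(2^(2k)-1)`, such that
`(Δ^[k] f) x = ∑_{α ∈ A} (2^(2k)·x + α)^n - ∑_{β ∈ B} (2^(2k)·x + β)^n` for all `x`. -/
theorem delta_iterate_as_signed_power_sum
    (n : ℕ) (hn : 2 ≤ n)
    (Δ : (ℤ → ℤ) → (ℤ → ℤ))
    (hΔ : ∀ (g : ℤ → ℤ) (x : ℤ), Δ g x = g (4 * x + 2) - g (4 * x))
    (k : ℕ) (hk1 : 1 ≤ k) (hkn : k ≤ n) :
    ∃ A B : Finset ℕ, Disjoint A B ∧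
      A.card = 2 ^ (k - 1) ∧ B.card = 2 ^ (k - 1) ∧
      (∀ α ∈ A ∪ B, 2 ∣ α ∧ α ≤ 2 * (2 ^ (2 * k) - 1) / 3) ∧
      ∀ x : ℤ, (Δ^[k] (fun y : ℤ => y ^ n)) x =
        ∑ α ∈ A, (2 ^ (2 * k) * x + (α : ℤ)) ^ n -
          ∑ β ∈ B, (2 ^ (2 * k) * x + (β : ℤ)) ^ n :=
  delta_iterate_as_signed_power_sum_general n Δ hΔ k hk1
end

section
/- Let n ≥ 2 be an integer. For every positive integer m there exist disjoint finite sets A and B, each contained in the arithmetic progression {m, m+2, m+4, …, m + (2/3)·(2^(2n)−1)}, such that ∑_{x∈A} x^n − ∑_{x∈B} x^n = n!·2^(n²). -/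
/-!
Put `b i = 2 ^ (2i+1) = 2·4^i`. The signed sum of `(m + ∑_{i∈S} b i)^n` over `S ⊆ {0,…,n-1}`
is the mixed forward difference `Δ_{b 0} ⋯ Δ_{b (n-1)}` of `x ↦ x^n` at `m`. Expanding
`(x + b)^k` binomially, a further difference of `x ↦ x^k` is a combination of differences of the
lower powers; so `k` differences kill every power below `k` and send `x^k` to the constant
`k! · ∏ b i`, here `n! · 2^(n²)`. The points `m + 2 ∑_{i∈S} 4^i` are
pairwise distinct (base-4 digits) and lie in the progression because `∑_{i<n} 4^i = (4^n-1)/3`;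
`A` and `B` collect the points carrying sign `+` and `-`.
-/

open Finset

section SignedPowSum

variable {ι R : Type*} [CommRing R]

def signedPowSum (b : ι → R) (T : Finset ι) (k : ℕ) (x : R) : R :=
  ∑ S ∈ T.powerset, (-1) ^ (#T - #S) * (x + ∑ i ∈ S, b i) ^ k

lemma signedPowSum_insert [DecidableEq ι] {b : ι → R} {T : Finset ι} {j : ι} (hj : j ∉ T)
    (k : ℕ) :
    signedPowSum b (insert j T) k = fwdDiff (b j) (signedPowSum b T k) := funext fun x => by
  have hS : ∀ S ∈ T.powerset, #S ≤ #T := fun S hS => card_le_card (mem_powerset.mp hS)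
  rw [fwdDiff, signedPowSum, sum_powerset_insert hj, card_insert_of_notMem hj, add_comm,
    sub_eq_add_neg, signedPowSum, signedPowSum, ← sum_neg_distrib]
  congr 1
  · refine sum_congr rfl fun S hS' => ?_
    have hjS : j ∉ S := fun h => hj (mem_powerset.mp hS' h)
    rw [card_insert_of_notMem hjS, sum_insert hjS, Nat.add_sub_add_right]
    ring
  · refine sum_congr rfl fun S hS' => ?_
    rw [Nat.succ_sub (hS S hS'), pow_succ]
    ring

lemma signedPowSum_add (b : ι → R) (T : Finset ι) (k : ℕ) (x c : R) :
    signedPowSum b T k (x + c) =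
      ∑ l ∈ range (k + 1), k.choose l * c ^ (k - l) * signedPowSum b T l x := by
  simp only [signedPowSum, mul_sum]
  rw [sum_comm]
  refine sum_congr rfl fun S _ => ?_
  rw [add_right_comm, add_pow, mul_sum]
  exact sum_congr rfl fun l _ => by ring

lemma signedPowSum_insert_eq_sum [DecidableEq ι] {b : ι → R} {T : Finset ι} {j : ι}
    (hj : j ∉ T) (k : ℕ) (x : R) :
    signedPowSum b (insert j T) k x =
      ∑ l ∈ range k, k.choose l * b j ^ (k - l) * signedPowSum b T l x := by
  rw [signedPowSum_insert hj, fwdDiff, signedPowSum_add, sum_range_succ]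
  simp

lemma signedPowSum_eq_zero_of_lt [DecidableEq ι] (b : ι → R) {T : Finset ι} {k : ℕ}
    (hk : k < #T) (x : R) :
    signedPowSum b T k x = 0 := by
  induction T using Finset.induction_on generalizing k with
  | empty => simp at hk
  | insert j T hj ih =>
    rw [card_insert_of_notMem hj] at hk
    rw [signedPowSum_insert_eq_sum hj]
    exact sum_eq_zero fun l hl => by rw [ih (by simp at hl; omega), mul_zero]

lemma signedPowSum_card [DecidableEq ι] (b : ι → R) (T : Finset ι) (x : R) :
    signedPowSum b T #T x = (#T).factorial * ∏ i ∈ T, b i := by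
  induction T using Finset.induction_on with
  | empty => simp [signedPowSum]
  | insert j T hj ih =>
    rw [signedPowSum_insert_eq_sum hj, card_insert_of_notMem hj, sum_range_succ,
      sum_eq_zero fun l hl => by rw [signedPowSum_eq_zero_of_lt b (mem_range.mp hl), mul_zero],
      ih, prod_insert hj, Nat.choose_succ_self_right, Nat.add_sub_cancel_left, Nat.factorial_succ]
    push_cast
    ring

end SignedPowSum

lemma sum_neg_one_pow_mul_eq_sub {α β R : Type*} [DecidableEq β] [CommRing R]
    (s : Finset α) (e : α → ℕ) {g : α → β} (hg : Function.Injective g) (F : β → R) :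
    ∑ a ∈ s, (-1) ^ e a * F (g a) =
      ∑ y ∈ {a ∈ s | Even (e a)}.image g, F y - ∑ y ∈ {a ∈ s | ¬Even (e a)}.image g, F y := by
  rw [sum_image hg.injOn, sum_image hg.injOn,
    ← sum_filter_add_sum_filter_not s (fun a => Even (e a)), sub_eq_add_neg, ← sum_neg_distrib]
  congr 1
  · exact sum_congr rfl fun a ha => by rw [(mem_filter.mp ha).2.neg_one_pow, one_mul]
  · exact sum_congr rfl fun a ha => by
      rw [(Nat.not_even_iff_odd.mp (mem_filter.mp ha).2).neg_one_pow, neg_one_mul]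

lemma prod_range_two_pow_two_mul_add_one (n : ℕ) :
    ∏ i ∈ range n, (2 : ℤ) ^ (2 * i + 1) = 2 ^ (n ^ 2) := by
  induction n with
  | zero => simp
  | succ n ih => rw [prod_range_succ, ih, ← pow_add]; ring_nf

lemma sum_four_pow_le_of_subset_range {S : Finset ℕ} {n : ℕ} (hS : S ⊆ range n) :
    ∑ i ∈ S, 4 ^ i ≤ (2 ^ (2 * n) - 1) / 3 := by
  rw [pow_mul, show (2 : ℕ) ^ 2 = 4 by norm_num, ← Nat.geomSum_eq (by norm_num)]
  exact sum_le_sum_of_subset hS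

theorem a_in_A_of_progression_general
    (n : ℕ) (m : ℕ) :
    ∃ A B : Finset ℕ, Disjoint A B ∧
      (↑A : Set ℕ) ⊆ {x | ∃ i : ℕ, i ≤ (2 ^ (2 * n) - 1) / 3 ∧ x = m + 2 * i} ∧
      (↑B : Set ℕ) ⊆ {x | ∃ i : ℕ, i ≤ (2 ^ (2 * n) - 1) / 3 ∧ x = m + 2 * i} ∧
      (∑ x ∈ A, (x : ℤ) ^ n) - ∑ x ∈ B, (x : ℤ) ^ n =
        (n.factorial : ℤ) * 2 ^ (n ^ 2) := by
  set pt : Finset ℕ → ℕ := fun S => m + 2 * ∑ i ∈ S, 4 ^ i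
  have pt_injective : Function.Injective pt := fun S S' h =>
    geomSum_injective (n := 4) (by norm_num) (by simpa [pt] using h)
  have pt_mem {S : Finset ℕ} (hS : S ∈ (range n).powerset) :
      pt S ∈ {x | ∃ i : ℕ, i ≤ (2 ^ (2 * n) - 1) / 3 ∧ x = m + 2 * i} :=
    ⟨_, sum_four_pow_le_of_subset_range (mem_powerset.mp hS), rfl⟩
  have signed_sum : ∑ S ∈ (range n).powerset, (-1) ^ (n - #S) * (pt S : ℤ) ^ n =
      n.factorial * 2 ^ (n ^ 2) := by
    have h := signedPowSum_card (fun i => (2 : ℤ) ^ (2 * i + 1)) (range n) m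
    rw [card_range, prod_range_two_pow_two_mul_add_one] at h
    rw [← h, signedPowSum, card_range]
    refine sum_congr rfl fun S _ => ?_
    simp only [pt, pow_succ, pow_mul, mul_sum]
    push_cast
    ring_nf
  refine ⟨{S ∈ (range n).powerset | Even (n - #S)}.image pt,
    {S ∈ (range n).powerset | ¬Even (n - #S)}.image pt,
    (disjoint_image pt_injective).mpr (disjoint_filter_filter_not _ _ _), ?_, ?_,
    (sum_neg_one_pow_mul_eq_sub _ (fun S => n - #S) pt_injective
      (fun x : ℕ => (x : ℤ) ^ n)).symm.trans signed_sum⟩ <;>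
  · intro x hx
    obtain ⟨S, hS, rfl⟩ := mem_image.mp hx
    exact pt_mem (mem_filter.mp hS).1

/-- For `n ≥ 2` and every positive integer `m`, there are disjoint finite subsets `A`, `B`
of the arithmetic progression `{m, m+2, …, m + (2/3)(2^(2n)-1)}` with
`∑_{x∈A} x^n - ∑_{x∈B} x^n = n!·2^(n²)`. -/
theorem a_in_A_of_progression
    (n : ℕ) (hn : 2 ≤ n) (m : ℕ) (hm : 0 < m) :
    ∃ A B : Finset ℕ, Disjoint A B ∧
      (↑A : Set ℕ) ⊆ {x | ∃ i : ℕ, i ≤ (2 ^ (2 * n) - 1) / 3 ∧ x = m + 2 * i} ∧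
      (↑B : Set ℕ) ⊆ {x | ∃ i : ℕ, i ≤ (2 ^ (2 * n) - 1) / 3 ∧ x = m + 2 * i} ∧
      (∑ x ∈ A, (x : ℤ) ^ n) - ∑ x ∈ B, (x : ℤ) ^ n =
        (n.factorial : ℤ) * 2 ^ (n ^ 2) :=
  a_in_A_of_progression_general n m
end

section
/- Let n ≥ 2 be an integer, a = n!·2^(n²), and r = 2^(n²−n)·a, and let B₁ = {α·a + β : 0 ≤ α ≤ 2^(n²−n)−1, 1 ≤ β ≤ 2^n}. Then the sum of the n-th powers of all elements of B₁ satisfies ∑_{m∈B₁} m^n < 2^(n²)·(r^n − n!) = 2^(n²)·r^n − a. -/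
/-!
Every element `α·a + β` of `B₁` is less than `r`, because `β ≤ 2^n < a`, and `B₁` has at most
`2^(n²)` elements, so the sum is at most `2^(n²)·(r-1)^n`. Since `r^n - (r-1)^n ≥ r^(n-1) ≥ r > n!`,
this is less than `2^(n²)·(r^n - n!)`.
-/

open Finset

lemma pow_succ_add_succ_pow_le (m k : ℕ) : m ^ (k + 1) + (m + 1) ^ k ≤ (m + 1) ^ (k + 1) :=
  calc m ^ (k + 1) + (m + 1) ^ k = m * m ^ k + (m + 1) ^ k := by rw [pow_succ']
    _ ≤ m * (m + 1) ^ k + (m + 1) ^ k := by gcongr; omega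
    _ = (m + 1) ^ (k + 1) := by ring

lemma pred_pow_add_pow_pred_le {r n : ℕ} (hr : 0 < r) (hn : 0 < n) :
    (r - 1) ^ n + r ^ (n - 1) ≤ r ^ n := by
  obtain ⟨m, rfl⟩ := Nat.exists_eq_add_of_lt hr
  obtain ⟨k, rfl⟩ := Nat.exists_eq_add_of_lt hn
  simpa [add_comm 1 m] using pow_succ_add_succ_pow_le m k

lemma sum_pow_le_card_mul_pred_pow {s : Finset ℕ} {r : ℕ} (hs : ∀ m ∈ s, m < r) (n : ℕ) :
    ∑ m ∈ s, m ^ n ≤ #s * (r - 1) ^ n := by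
  simpa using sum_le_card_nsmul s (· ^ n) ((r - 1) ^ n)
    fun m hm ↦ Nat.pow_le_pow_left (Nat.le_sub_one_of_lt (hs m hm)) n

lemma mul_add_lt_of_mem_range_Icc {N q a : ℕ} (hqa : q < a) {p : ℕ × ℕ}
    (hp : p ∈ range N ×ˢ Icc 1 q) : p.1 * a + p.2 < N * a := by
  simp only [mem_product, mem_range, mem_Icc] at hp
  calc p.1 * a + p.2 < (p.1 + 1) * a := by nlinarith
    _ ≤ N * a := by gcongr; omega

lemma card_image_range_Icc_le (N q : ℕ) (f : ℕ × ℕ → ℕ) :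
    #((range N ×ˢ Icc 1 q).image f) ≤ N * q :=
  card_image_le.trans_eq (by simp)

/-- With `a = n!·2^(n²)`, `r = 2^(n²-n)·a`, and
`B₁ = {α·a + β : 0 ≤ α ≤ 2^(n²-n)-1, 1 ≤ β ≤ 2^n}`, the sum of `n`-th powers of the
elements of `B₁` satisfies `∑_{m∈B₁} m^n < 2^(n²)·(r^n - n!) = 2^(n²)·r^n - a`. -/
theorem sum_of_powers_of_B1_bound
    (n : ℕ) (hn : 2 ≤ n) (a r : ℕ)
    (ha : a = n.factorial * 2 ^ (n ^ 2))
    (hr : r = 2 ^ (n ^ 2 - n) * a)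
    (B1 : Finset ℕ)
    (hB1 : B1 = (Finset.range (2 ^ (n ^ 2 - n)) ×ˢ Finset.Icc 1 (2 ^ n)).image
      (fun p => p.1 * a + p.2)) :
    (∑ m ∈ B1, m ^ n < 2 ^ (n ^ 2) * (r ^ n - n.factorial)) ∧
    2 ^ (n ^ 2) * (r ^ n - n.factorial) = 2 ^ (n ^ 2) * r ^ n - a := by
  have hn2 : n ≤ n ^ 2 := by nlinarith
  have hsq : 2 ^ (n ^ 2 - n) * 2 ^ n = 2 ^ (n ^ 2) := by rw [← pow_add, Nat.sub_add_cancel hn2]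
  have hfact : 2 ≤ n.factorial := Nat.factorial_le hn
  have hqa : 2 ^ n < a := by
    rw [ha]
    calc 2 ^ n ≤ 2 ^ (n ^ 2) := Nat.pow_le_pow_right two_pos hn2
      _ < 2 * 2 ^ (n ^ 2) := lt_two_mul_self (by positivity)
      _ ≤ n.factorial * 2 ^ (n ^ 2) := by gcongr
  have hfact_lt_r : n.factorial < r :=
    calc n.factorial < n.factorial * 2 ^ (n ^ 2) :=
          lt_mul_of_one_lt_right n.factorial_pos (Nat.one_lt_two_pow (by positivity))
      _ ≤ r := by rw [hr, ha]; exact Nat.le_mul_of_pos_left _ (by positivity)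
  have hfact_lt : n.factorial < r ^ (n - 1) := hfact_lt_r.trans_le (Nat.le_self_pow (by omega) r)
  have hlt : ∀ m ∈ B1, m < r := by
    simp only [hB1, hr, mem_image]
    rintro _ ⟨p, hp, rfl⟩
    exact mul_add_lt_of_mem_range_Icc hqa hp
  have hcard : #B1 ≤ 2 ^ (n ^ 2) := by rw [hB1, ← hsq]; exact card_image_range_Icc_le _ _ _
  have hgap : (r - 1) ^ n + r ^ (n - 1) ≤ r ^ n := pred_pow_add_pow_pred_le (by omega) (by omega)
  refine ⟨?_, by rw [Nat.mul_sub, ha]; ring_nf⟩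
  calc ∑ m ∈ B1, m ^ n ≤ #B1 * (r - 1) ^ n := sum_pow_le_card_mul_pred_pow hlt n
    _ ≤ 2 ^ (n ^ 2) * (r - 1) ^ n := by gcongr
    _ < 2 ^ (n ^ 2) * (r ^ n - n.factorial) := by gcongr; omega
end

section
/- Let n ≥ 2 be an integer, a = n!·2^(n²), and r = 2^(n²−n)·a. Then ((2^(n²−n)−1)·a + 2^n)^n < r^n − (a − 2^n)^n, and in particular the largest element of B₁ = {α·a + β : 0 ≤ α ≤ 2^(n²−n)−1, 1 ≤ β ≤ 2^n} has n-th power strictly less than r^n − n!. -/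
/-!
Put `x = (2^(n²-n) - 1)·a + 2^n` and `y = a - 2^n`. Then `x + y = 2^(n²-n)·a = r`, and both are
positive, so strict superadditivity of `t ↦ tⁿ` for `n ≥ 2` gives `xⁿ < rⁿ - yⁿ`. The second bound
follows because `n! < y ≤ yⁿ`.
-/

open scoped Nat

section StrictOrderedSemiring

variable {R : Type*} [Semiring R] [PartialOrder R] [IsStrictOrderedRing R]

theorem pow_add_pow_lt {x y : R} {n : ℕ} (hx : 0 < x) (hy : 0 < y) (hn : 2 ≤ n) :
    x ^ n + y ^ n < (x + y) ^ n := by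
  obtain ⟨k, rfl⟩ : ∃ k, n = k + 1 := ⟨n - 1, by omega⟩
  have hk : k ≠ 0 := by omega
  have hxk : x ^ k < (x + y) ^ k := pow_lt_pow_left₀ (lt_add_of_pos_right x hy) hx.le hk
  have hyk : y ^ k < (x + y) ^ k := pow_lt_pow_left₀ (lt_add_of_pos_left y hx) hy.le hk
  calc x ^ (k + 1) + y ^ (k + 1) = x * x ^ k + y * y ^ k := by rw [pow_succ', pow_succ']
    _ < x * (x + y) ^ k + y * (x + y) ^ k :=
        add_lt_add (mul_lt_mul_of_pos_left hxk hx) (mul_lt_mul_of_pos_left hyk hy)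
    _ = (x + y) ^ (k + 1) := by rw [← add_mul, pow_succ']

end StrictOrderedSemiring

theorem Nat.factorial_add_two_pow_lt_factorial_mul_two_pow_sq {n : ℕ} (hn : 2 ≤ n) :
    n ! + 2 ^ n < n ! * 2 ^ (n ^ 2) := by
  have hfac : 1 ≤ n ! := n.factorial_pos
  have htwo : 2 ≤ 2 ^ n := Nat.le_self_pow (by omega) 2
  have hexp : 2 ^ (n + 1) ≤ 2 ^ (n ^ 2) := Nat.pow_le_pow_right (by norm_num) (by nlinarith)
  calc n ! + 2 ^ n < n ! * 2 ^ n + n ! * 2 ^ n := by nlinarith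
    _ = n ! * 2 ^ (n + 1) := by ring
    _ ≤ n ! * 2 ^ (n ^ 2) := Nat.mul_le_mul_left _ hexp

/-- With `a = n!·2^(n²)` and `r = 2^(n²-n)·a`, the largest element of `B₁` satisfies
`((2^(n²-n)-1)·a + 2^n)^n < r^n - (a - 2^n)^n`, and in particular its `n`-th power is
strictly less than `r^n - n!`. -/
theorem largest_element_of_B1_power_bound
    (n : ℕ) (hn : 2 ≤ n) (a r : ℕ)
    (ha : a = n.factorial * 2 ^ (n ^ 2))
    (hr : r = 2 ^ (n ^ 2 - n) * a) :
    ((2 ^ (n ^ 2 - n) - 1) * a + 2 ^ n) ^ n < r ^ n - (a - 2 ^ n) ^ n ∧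
    ((2 ^ (n ^ 2 - n) - 1) * a + 2 ^ n) ^ n < r ^ n - n.factorial := by
  set m := 2 ^ (n ^ 2 - n)
  have hm : 1 ≤ m := Nat.one_le_two_pow
  have hfac_lt : n ! < a - 2 ^ n := by
    have := Nat.factorial_add_two_pow_lt_factorial_mul_two_pow_sq hn
    omega
  have hsum : (m - 1) * a + 2 ^ n + (a - 2 ^ n) = r := by
    have : (m - 1) * a + a = m * a := by rw [← add_one_mul, Nat.sub_one_add_one_eq_of_pos hm]
    omega
  have hpow := pow_add_pow_lt (x := (m - 1) * a + 2 ^ n) (y := a - 2 ^ n)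
    (by positivity) (by omega) hn
  rw [hsum] at hpow
  have hfac_le : n ! ≤ (a - 2 ^ n) ^ n := hfac_lt.le.trans (Nat.le_self_pow (by omega) _)
  exact ⟨by omega, by omega⟩
end
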